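/- arXiv:2306.02491 — 19 statements merged into one kernel-verified Lean document; each statement's English description precedes it below -/
import Mathlib

section
/- Let Σ be a finite alphabet and let L ⊆ Σ* be a regular language. Then the left quotient union lattice of L is isomorphic to the dual lattice of the right quotient union lattice of L; concretely, there exists a bijection f from the set of unions of left quotients of L onto the set of unions of right quotients of L such that for all unions of left quotients X, X', one has X ⊆ X' if and only if f(X') ⊆ f(X) (i.e., the two posets are order-isomorphic after reversing one of the orders). -/
open Set

/-- The left quotient `w⁻¹L = {x : wx ∈ L}`. -/
def leftQuot {α : Type*} (L : Set (List α)) (w : List α) : Set (List α) :=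
  {x | w ++ x ∈ L}

/-- The right quotient `Lv⁻¹ = {u : uv ∈ L}`. -/
def rightQuot {α : Type*} (L : Set (List α)) (v : List α) : Set (List α) :=
  {u | u ++ v ∈ L}

/-- The left atom of `L` at `v`: the class of `v` under the left congruence of `L`. -/
def leftAtom {α : Type*} (L : Set (List α)) (v : List α) : Set (List α) :=
  {x | ∀ u : List α, u ++ x ∈ L ↔ u ++ v ∈ L}

/-- The right atom of `L` at `w`: the Nerode class of `w`. -/
def rightAtom {α : Type*} (L : Set (List α)) (w : List α) : Set (List α) :=
  {u | ∀ x : List α, u ++ x ∈ L ↔ w ++ x ∈ L}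

/-- `X` is a union of left quotients of `L`. -/
def IsUnionLeftQuot {α : Type*} (L : Set (List α)) (X : Set (List α)) : Prop :=
  ∃ W : Set (List α), X = ⋃ w ∈ W, leftQuot L w

/-- `Y` is a union of right quotients of `L`. -/
def IsUnionRightQuot {α : Type*} (L : Set (List α)) (Y : Set (List α)) : Prop :=
  ∃ W : Set (List α), Y = ⋃ v ∈ W, rightQuot L v

/-- `X` is an intersection of left quotients of `L` (empty intersection is `Σ*`). -/
def IsInterLeftQuot {α : Type*} (L : Set (List α)) (X : Set (List α)) : Prop :=
  ∃ W : Set (List α), X = ⋂ w ∈ W, leftQuot L w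

/-- `Y` is an intersection of right quotients of `L` (empty intersection is `Σ*`). -/
def IsInterRightQuot {α : Type*} (L : Set (List α)) (Y : Set (List α)) : Prop :=
  ∃ W : Set (List α), Y = ⋂ v ∈ W, rightQuot L v

/-- The map `Ψ(X) = ⋃ {Lv⁻¹ : v ∉ X}`. -/
def Psi {α : Type*} (L : Set (List α)) (X : Set (List α)) : Set (List α) :=
  ⋃ v ∈ {v : List α | v ∉ X}, rightQuot L v

/-- The map `Ψ'(Y) = ⋃ {u⁻¹L : u ∉ Y}`. -/
def Psi' {α : Type*} (L : Set (List α)) (Y : Set (List α)) : Set (List α) :=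
  ⋃ u ∈ {u : List α | u ∉ Y}, leftQuot L u

/-- The map `Φ(X) = ⋂ {Lv⁻¹ : v ∈ X}` (empty intersection is `Σ*`). -/
def Phi {α : Type*} (L : Set (List α)) (X : Set (List α)) : Set (List α) :=
  ⋂ v ∈ X, rightQuot L v

/-- The map `Φ'(Y) = ⋂ {u⁻¹L : u ∈ Y}` (empty intersection is `Σ*`). -/
def Phi' {α : Type*} (L : Set (List α)) (Y : Set (List α)) : Set (List α) :=
  ⋂ u ∈ Y, leftQuot L u


lemma mem_Psi {α : Type*} (L X : Set (List α)) (u : List α) :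
    u ∈ Psi L X ↔ ∃ v, v ∉ X ∧ u ++ v ∈ L := by
  simp [Psi, rightQuot]

lemma mem_Psi' {α : Type*} (L Y : Set (List α)) (v : List α) :
    v ∈ Psi' L Y ↔ ∃ u, u ∉ Y ∧ u ++ v ∈ L := by
  simp [Psi', leftQuot]

lemma Psi_anti {α : Type*} (L : Set (List α)) {X X' : Set (List α)} (h : X ⊆ X') :
    Psi L X' ⊆ Psi L X := by
  intro u hu
  rw [mem_Psi] at hu ⊢
  obtain ⟨v, hv, hvL⟩ := hu
  exact ⟨v, fun hx => hv (h hx), hvL⟩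

lemma Psi'_anti {α : Type*} (L : Set (List α)) {Y Y' : Set (List α)} (h : Y ⊆ Y') :
    Psi' L Y' ⊆ Psi' L Y := by
  intro v hv
  rw [mem_Psi'] at hv ⊢
  obtain ⟨u, hu, huL⟩ := hv
  exact ⟨u, fun hy => hu (h hy), huL⟩

lemma psi'_psi {α : Type*} (L : Set (List α)) {X : Set (List α)}
    (hX : IsUnionLeftQuot L X) : Psi' L (Psi L X) = X := by
  obtain ⟨W, rfl⟩ := hX
  ext v
  rw [mem_Psi']
  constructor
  · rintro ⟨u, hu, huv⟩
    by_contra hv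
    exact hu ((mem_Psi _ _ _).2 ⟨v, hv, huv⟩)
  · intro hv
    rw [Set.mem_iUnion₂] at hv
    obtain ⟨w, hw, hwv⟩ := hv
    refine ⟨w, ?_, hwv⟩
    rw [mem_Psi]
    rintro ⟨v', hv', hwv'⟩
    exact hv' (Set.mem_iUnion₂.2 ⟨w, hw, hwv'⟩)

lemma psi_psi' {α : Type*} (L : Set (List α)) {Y : Set (List α)}
    (hY : IsUnionRightQuot L Y) : Psi L (Psi' L Y) = Y := by
  obtain ⟨W, rfl⟩ := hY
  ext u
  rw [mem_Psi]
  constructor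
  · rintro ⟨v, hv, huv⟩
    by_contra hu
    exact hv ((mem_Psi' _ _ _).2 ⟨u, hu, huv⟩)
  · intro hu
    rw [Set.mem_iUnion₂] at hu
    obtain ⟨w, hw, huw⟩ := hu
    refine ⟨w, ?_, huw⟩
    rw [mem_Psi']
    rintro ⟨u', hu', hu'w⟩
    exact hu' (Set.mem_iUnion₂.2 ⟨w, hw, hu'w⟩)

/-- the left quotient union lattice of a regular language is
isomorphic to the dual of the right quotient union lattice. -/
theorem union_lattice_duality {α : Type*} [Fintype α] (L : Set (List α))
    (hL : Language.IsRegular L) :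
    ∃ f : Set (List α) → Set (List α),
      Set.BijOn f {X | IsUnionLeftQuot L X} {Y | IsUnionRightQuot L Y} ∧
      ∀ X ∈ {X | IsUnionLeftQuot L X}, ∀ X' ∈ {X | IsUnionLeftQuot L X},
        (X ⊆ X' ↔ f X' ⊆ f X) := by
  refine ⟨Psi L, ⟨?_, ?_, ?_⟩, ?_⟩
  · intro X hX
    exact ⟨{v | v ∉ X}, rfl⟩
  · intro X hX X' hX' h
    rw [← psi'_psi L hX, ← psi'_psi L hX', h]
  · intro Y hY
    refine ⟨Psi' L Y, ⟨{u | u ∉ Y}, rfl⟩, psi_psi' L hY⟩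
  · intro X hX X' hX'
    constructor
    · exact fun h => Psi_anti L h
    · intro h
      rw [← psi'_psi L hX, ← psi'_psi L hX']
      exact Psi'_anti L h
end

section
/- Let Σ be a finite alphabet and let L ⊆ Σ* be a regular language. Then the left quotient intersection lattice of L is isomorphic to the dual lattice of the right quotient intersection lattice of L; concretely, there exists a bijection f from the set of intersections of left quotients of L onto the set of intersections of right quotients of L such that for all intersections of left quotients X, X', one has X ⊆ X' if and only if f(X') ⊆ f(X). -/
open Set

lemma phi_antitone {α : Type*} (L : Set (List α)) {X X' : Set (List α)} (h : X ⊆ X') :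
    Phi L X' ⊆ Phi L X := by
  intro u hu
  simp only [Phi, mem_iInter] at hu ⊢
  exact fun v hv => hu v (h hv)

lemma phi'_antitone {α : Type*} (L : Set (List α)) {Y Y' : Set (List α)} (h : Y ⊆ Y') :
    Phi' L Y' ⊆ Phi' L Y := by
  intro x hx
  simp only [Phi', mem_iInter] at hx ⊢
  exact fun u hu => hx u (h hu)

lemma sub_phi'_phi {α : Type*} (L : Set (List α)) (X : Set (List α)) :
    X ⊆ Phi' L (Phi L X) := by
  intro x hx
  simp only [Phi', Phi, leftQuot, rightQuot, mem_iInter, mem_setOf_eq] at *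
  exact fun u hu => hu x hx

lemma sub_phi_phi' {α : Type*} (L : Set (List α)) (Y : Set (List α)) :
    Y ⊆ Phi L (Phi' L Y) := by
  intro u hu
  simp only [Phi', Phi, leftQuot, rightQuot, mem_iInter, mem_setOf_eq] at *
  exact fun x hx => hx u hu

lemma interLeft_iff {α : Type*} (L : Set (List α)) (X : Set (List α)) :
    IsInterLeftQuot L X ↔ ∃ Y, X = Phi' L Y := Iff.rfl

lemma phi'_phi_closed {α : Type*} (L : Set (List α)) {X : Set (List α)}
    (h : IsInterLeftQuot L X) : Phi' L (Phi L X) = X := by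
  obtain ⟨W, rfl⟩ := h
  show Phi' L (Phi L (Phi' L W)) = Phi' L W
  exact subset_antisymm (phi'_antitone L (sub_phi_phi' L W)) (sub_phi'_phi L _)

/-- the left quotient intersection lattice of a regular language is
isomorphic to the dual of the right quotient intersection lattice. -/
theorem inter_lattice_duality {α : Type*} [Fintype α] (L : Set (List α))
    (hL : Language.IsRegular L) :
    ∃ f : Set (List α) → Set (List α),
      Set.BijOn f {X | IsInterLeftQuot L X} {Y | IsInterRightQuot L Y} ∧
      ∀ X ∈ {X | IsInterLeftQuot L X}, ∀ X' ∈ {X | IsInterLeftQuot L X},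
        (X ⊆ X' ↔ f X' ⊆ f X) := by
  refine ⟨Phi L, ⟨?_, ?_, ?_⟩, ?_⟩
  · intro X _
    exact ⟨X, rfl⟩
  · intro X hX X' hX' h
    rw [← phi'_phi_closed L hX, ← phi'_phi_closed L hX', h]
  · rintro Y ⟨W, rfl⟩
    refine ⟨Phi' L (Phi L W), ⟨_, rfl⟩, ?_⟩
    exact subset_antisymm (phi_antitone L (sub_phi'_phi L W)) (sub_phi_phi' L _)
  · intro X hX X' hX'
    constructor
    · exact fun h => phi_antitone L h
    · intro h
      rw [← phi'_phi_closed L hX, ← phi'_phi_closed L hX']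
      exact phi'_antitone L h
end

section
/- Let N be an NFA over alphabet α with finite state type Q. Suppose (i) N has no empty states: for every q ∈ Q there is a word w with N.evalFrom {q} w ∩ N.accept nonempty; and (ii) the reverse NFA N^R is deterministic: N.accept is a singleton and for every state p and letter a there is exactly one state q with p ∈ N.step q a. Then the subset-construction DFA N^D is minimal on its reachable part: for any two reachable states S, T of N^D, if the right languages of S and T are equal then S = T. -/
/-!
A word `x` is accepted from the state `s` exactly when `s` is reached by the reverse automaton on
`x.reverse`. If the reverse automaton is deterministic, it reaches at most one state on each word,
so every word is accepted from at most one state. Hence a set of states `S` is recovered from its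
right language: without empty states, every `s ∈ S` is the unique state accepting some word of it.
-/

namespace NFA

variable {α σ : Type*} (M : NFA α σ)

theorem subsingleton_stepSet {S : Set σ} (hS : S.Subsingleton)
    (hstep : ∀ s a, (M.step s a).Subsingleton) (a : α) : (M.stepSet S a).Subsingleton := by
  rcases hS.eq_empty_or_singleton with rfl | ⟨s, rfl⟩
  · rw [stepSet_empty]
    exact Set.subsingleton_empty
  · rw [stepSet_singleton]
    exact hstep s a

theorem subsingleton_evalFrom {S : Set σ} (hS : S.Subsingleton)
    (hstep : ∀ s a, (M.step s a).Subsingleton) (x : List α) : (M.evalFrom S x).Subsingleton := by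
  induction x generalizing S with
  | nil => exact hS
  | cons a x ih => exact ih (M.subsingleton_stepSet hS hstep a)

theorem mem_acceptsFrom_singleton_iff_mem_reverse_evalFrom {s : σ} {x : List α} :
    x ∈ M.acceptsFrom {s} ↔ s ∈ M.reverse.evalFrom M.accept x.reverse := by
  rw [← Set.singleton_inter_nonempty, ← Set.not_disjoint_iff_nonempty_inter,
    disjoint_evalFrom_reverse_iff, List.reverse_reverse, Set.not_disjoint_iff, mem_acceptsFrom]

theorem subsingleton_setOf_mem_acceptsFrom_singleton (hstart : M.reverse.start.Subsingleton)
    (hstep : ∀ s a, (M.reverse.step s a).Subsingleton) (x : List α) :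
    {s | x ∈ M.acceptsFrom {s}}.Subsingleton := by
  simp_rw [mem_acceptsFrom_singleton_iff_mem_reverse_evalFrom]
  exact M.reverse.subsingleton_evalFrom hstart hstep x.reverse

theorem mem_acceptsFrom_iff_exists {S : Set σ} {x : List α} :
    x ∈ M.acceptsFrom S ↔ ∃ s ∈ S, x ∈ M.acceptsFrom {s} := by
  simp only [mem_acceptsFrom, mem_evalFrom_iff_exists (S := S)]
  exact ⟨fun ⟨a, ha, s, hs, h⟩ ↦ ⟨s, hs, a, ha, h⟩, fun ⟨s, hs, a, ha, h⟩ ↦ ⟨a, ha, s, hs, h⟩⟩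

theorem toDFA_acceptsFrom (S : Set σ) : M.toDFA.acceptsFrom S = M.acceptsFrom S := by
  ext x
  exact ⟨fun ⟨s, hS, hacc⟩ ↦ ⟨s, hacc, hS⟩, fun ⟨s, hacc, hS⟩ ↦ ⟨s, hS, hacc⟩⟩

theorem acceptsFrom_injective (hnonempty : ∀ s, (M.acceptsFrom {s}).Nonempty)
    (hstart : M.reverse.start.Subsingleton) (hstep : ∀ s a, (M.reverse.step s a).Subsingleton) :
    Function.Injective M.acceptsFrom := by
  suffices key : ∀ S T, M.acceptsFrom S = M.acceptsFrom T → S ⊆ T from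
    fun S T h ↦ (key S T h).antisymm (key T S h.symm)
  intro S T h s hs
  obtain ⟨x, hx⟩ := hnonempty s
  have hxT : x ∈ M.acceptsFrom T := h ▸ M.mem_acceptsFrom_iff_exists.2 ⟨s, hs, hx⟩
  obtain ⟨t, ht, htx⟩ := M.mem_acceptsFrom_iff_exists.1 hxT
  rwa [M.subsingleton_setOf_mem_acceptsFrom_singleton hstart hstep x hx htx]

end NFA

theorem toDFA_minimal_of_reverse_deterministic_general {α Q : Type*} (N : NFA α Q)
    (hnoempty : ∀ q : Q, ∃ w : List α, (N.evalFrom {q} w ∩ N.accept).Nonempty)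
    (haccept : ∃ q₀ : Q, N.accept = {q₀})
    (hdet : ∀ (p : Q) (a : α), ∃! q : Q, p ∈ N.step q a) :
    ∀ S T : Set Q, (∃ w : List α, S = N.toDFA.eval w) →
      (∃ w : List α, T = N.toDFA.eval w) →
      {w : List α | N.toDFA.evalFrom S w ∈ N.toDFA.accept} =
        {w : List α | N.toDFA.evalFrom T w ∈ N.toDFA.accept} →
      S = T := by
  intro S T _ _ hlang
  have hnonempty (q : Q) : (N.acceptsFrom {q}).Nonempty := by
    obtain ⟨w, s, hs, hacc⟩ := hnoempty q
    exact ⟨w, s, hacc, hs⟩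
  have hstart : N.reverse.start.Subsingleton := by
    obtain ⟨q₀, hq₀⟩ := haccept
    simp [hq₀]
  have hstep (p : Q) (a : α) : (N.reverse.step p a).Subsingleton :=
    fun _ hq _ hq' ↦ (hdet p a).unique hq hq'
  apply N.acceptsFrom_injective hnonempty hstart hstep
  rw [← N.toDFA_acceptsFrom, ← N.toDFA_acceptsFrom]
  exact hlang

/-- if an NFA `N` has no empty states and its reverse is
deterministic, then the subset-construction DFA `N.toDFA` is minimal on its
reachable part: reachable states with equal right languages are equal. -/
theorem toDFA_minimal_of_reverse_deterministic {α Q : Type*} [Fintype Q] (N : NFA α Q)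
    (hnoempty : ∀ q : Q, ∃ w : List α, (N.evalFrom {q} w ∩ N.accept).Nonempty)
    (haccept : ∃ q₀ : Q, N.accept = {q₀})
    (hdet : ∀ (p : Q) (a : α), ∃! q : Q, p ∈ N.step q a) :
    ∀ S T : Set Q, (∃ w : List α, S = N.toDFA.eval w) →
      (∃ w : List α, T = N.toDFA.eval w) →
      {w : List α | N.toDFA.evalFrom S w ∈ N.toDFA.accept} =
        {w : List α | N.toDFA.evalFrom T w ∈ N.toDFA.accept} →
      S = T :=
  toDFA_minimal_of_reverse_deterministic_general N hnoempty haccept hdet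
end

section
/- Let Σ be a finite alphabet and let L ⊆ Σ* be a nonempty regular language. Then for all words v, w ∈ Σ*: (i) Lv⁻¹ = ⋃ {B(w') : w' ∈ Σ*, w'v ∈ L}; (ii) w⁻¹L = ⋃ {A(v') : v' ∈ Σ*, wv' ∈ L}; and in particular (iii) A(v) ⊆ w⁻¹L if and only if B(w) ⊆ Lv⁻¹. -/
open Set

/-- relationships between quotients and atoms. -/
theorem quotients_as_unions_of_atoms {α : Type*} [Fintype α] (L : Set (List α))
    (hne : L.Nonempty) (hL : Language.IsRegular L) (v w : List α) :
    (rightQuot L v = ⋃ w' ∈ {w' : List α | w' ++ v ∈ L}, rightAtom L w') ∧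
    (leftQuot L w = ⋃ v' ∈ {v' : List α | w ++ v' ∈ L}, leftAtom L v') ∧
    (leftAtom L v ⊆ leftQuot L w ↔ rightAtom L w ⊆ rightQuot L v) := by
  refine ⟨?_, ?_, ?_⟩
  · ext u
    simp only [rightQuot, rightAtom, mem_setOf_eq, mem_iUnion, exists_prop]
    constructor
    · intro h; exact ⟨u, h, fun x => Iff.rfl⟩
    · rintro ⟨w', hw', h⟩; exact (h v).mpr hw'
  · ext x
    simp only [leftQuot, leftAtom, mem_setOf_eq, mem_iUnion, exists_prop]
    constructor
    · intro h; exact ⟨x, h, fun u => Iff.rfl⟩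
    · rintro ⟨v', hv', h⟩; exact (h w).mpr hv'
  · constructor
    · intro h u hu
      exact (hu v).mpr (h (fun u => Iff.rfl))
    · intro h x hx
      exact (hx w).mpr (h (fun x => Iff.rfl))
end

section
/- Let Σ be a finite alphabet, let L ⊆ Σ* be a nonempty regular language, and let X ⊆ Σ* be a union of left atoms of L (i.e., for every v ∈ X, A(v) ⊆ X). Then ⋃ {Lv⁻¹ : v ∈ Σ*, ¬(A(v) ⊆ X)} = ⋃ {B(w) : w ∈ Σ*, ¬(w⁻¹L ⊆ X)}. -/
open Set

/-- Lemma 2(1) of the paper. -/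
theorem union_rightQuot_eq_union_rightAtom {α : Type*} [Fintype α] (L : Set (List α))
    (hne : L.Nonempty) (hL : Language.IsRegular L) (X : Set (List α))
    (hX : ∀ v ∈ X, leftAtom L v ⊆ X) :
    ⋃ v ∈ {v : List α | ¬ leftAtom L v ⊆ X}, rightQuot L v
      = ⋃ w ∈ {w : List α | ¬ leftQuot L w ⊆ X}, rightAtom L w := by
  ext u
  simp only [mem_iUnion, mem_setOf_eq, exists_prop]
  constructor
  · rintro ⟨v, hv, huv⟩
    have hvX : v ∉ X := fun h => hv (hX v h)
    exact ⟨u, fun hsub => hvX (hsub huv), fun x => Iff.rfl⟩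
  · rintro ⟨w, hw, hu⟩
    obtain ⟨x, hxL, hxX⟩ := not_subset.mp hw
    refine ⟨x, ?_, (hu x).mpr hxL⟩
    intro hsub
    exact hxX (hsub (fun u' => Iff.rfl))
end

section
/- Let Σ be a finite alphabet, let L ⊆ Σ* be a nonempty regular language, and let X ⊆ Σ* be a union of left atoms of L (i.e., for every v ∈ X, A(v) ⊆ X). Then ⋂ {Lv⁻¹ : v ∈ Σ*, A(v) ⊆ X} = ⋃ {B(w) : w ∈ Σ*, X ⊆ w⁻¹L}, where an intersection over an empty index family is Σ*. -/
open Set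

/-- Lemma 2(2) of the paper. -/
theorem inter_rightQuot_eq_union_rightAtom {α : Type*} [Fintype α] (L : Set (List α))
    (hne : L.Nonempty) (hL : Language.IsRegular L) (X : Set (List α))
    (hX : ∀ v ∈ X, leftAtom L v ⊆ X) :
    ⋂ v ∈ {v : List α | leftAtom L v ⊆ X}, rightQuot L v
      = ⋃ w ∈ {w : List α | X ⊆ leftQuot L w}, rightAtom L w := by
  ext u
  simp only [mem_iUnion, mem_iInter, mem_setOf_eq, rightQuot, rightAtom, leftQuot, leftAtom,
    mem_setOf_eq]
  constructor
  · intro h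
    refine ⟨u, fun v hv => h v (hX v hv), fun x => Iff.rfl⟩
  · rintro ⟨w, hw, hu⟩ v hv
    have hvX : v ∈ X := hv (fun u' => Iff.rfl)
    exact (hu v).mpr (hw hvX)
end

section
/- Let Σ be a finite alphabet, let L ⊆ Σ* be a nonempty regular language, and let Y ⊆ Σ* be a union of right atoms of L (i.e., for every w ∈ Y, B(w) ⊆ Y). Then ⋃ {w⁻¹L : w ∈ Σ*, ¬(B(w) ⊆ Y)} = ⋃ {A(v) : v ∈ Σ*, ¬(Lv⁻¹ ⊆ Y)}. -/
open Set

/-- Lemma 2(3) of the paper. -/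
theorem union_leftQuot_eq_union_leftAtom {α : Type*} [Fintype α] (L : Set (List α))
    (hne : L.Nonempty) (hL : Language.IsRegular L) (Y : Set (List α))
    (hY : ∀ w ∈ Y, rightAtom L w ⊆ Y) :
    ⋃ w ∈ {w : List α | ¬ rightAtom L w ⊆ Y}, leftQuot L w
      = ⋃ v ∈ {v : List α | ¬ rightQuot L v ⊆ Y}, leftAtom L v := by
  ext x
  simp only [mem_iUnion, mem_setOf_eq, exists_prop]
  constructor
  · rintro ⟨w, hw, hx⟩
    rw [Set.not_subset] at hw
    obtain ⟨u, hu, huY⟩ := hw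
    exact ⟨x, fun h => huY (h ((hu x).mpr hx)),
      fun u' => Iff.rfl⟩
  · rintro ⟨v, hv, hx⟩
    rw [Set.not_subset] at hv
    obtain ⟨u, hu, huY⟩ := hv
    refine ⟨u, fun h => huY (h (fun y => Iff.rfl)), ?_⟩
    exact (hx u).mpr hu
end

section
/- Let Σ be a finite alphabet, let L ⊆ Σ* be a nonempty regular language, and let Y ⊆ Σ* be a union of right atoms of L (i.e., for every w ∈ Y, B(w) ⊆ Y). Then ⋂ {w⁻¹L : w ∈ Σ*, B(w) ⊆ Y} = ⋃ {A(v) : v ∈ Σ*, Y ⊆ Lv⁻¹}, where an intersection over an empty index family is Σ*. -/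
open Set

/-- Lemma 2(4) of the paper. -/
theorem inter_leftQuot_eq_union_leftAtom {α : Type*} [Fintype α] (L : Set (List α))
    (hne : L.Nonempty) (hL : Language.IsRegular L) (Y : Set (List α))
    (hY : ∀ w ∈ Y, rightAtom L w ⊆ Y) :
    ⋂ w ∈ {w : List α | rightAtom L w ⊆ Y}, leftQuot L w
      = ⋃ v ∈ {v : List α | Y ⊆ rightQuot L v}, leftAtom L v := by
  ext x
  simp only [mem_iInter, mem_iUnion, mem_setOf_eq, leftQuot, leftAtom, rightAtom, rightQuot,
    exists_prop]
  constructor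
  · intro h
    refine ⟨x, fun u hu => h u (hY u hu), fun u => Iff.rfl⟩
  · rintro ⟨v, hv, hx⟩ w hw
    exact (hx w).mpr (hv (hw (fun _ => Iff.rfl)))
end

section
/- Let Σ be a finite alphabet and let L ⊆ Σ* be a nonempty regular language. Then Ψ and Ψ' are mutually inverse bijections between the set of unions of left quotients of L and the set of unions of right quotients of L: for every union of left quotients X, Ψ'(Ψ(X)) = X, and for every union of right quotients Y, Ψ(Ψ'(Y)) = Y. -/
open Set

/-- Ψ and Ψ' are mutually inverse bijections. -/
theorem psi_psi'_inverse {α : Type*} [Fintype α] (L : Set (List α))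
    (hne : L.Nonempty) (hL : Language.IsRegular L) :
    (∀ X : Set (List α), IsUnionLeftQuot L X → Psi' L (Psi L X) = X) ∧
    (∀ Y : Set (List α), IsUnionRightQuot L Y → Psi L (Psi' L Y) = Y) := by
  constructor
  · rintro X ⟨W, rfl⟩
    ext x
    simp only [Psi', Psi, leftQuot, rightQuot, mem_iUnion, mem_setOf_eq, not_exists,
      exists_prop, mem_iUnion₂]
    constructor
    · rintro ⟨u, hu, hx⟩
      have h := hu x
      push_neg at h
      by_contra hc
      push_neg at hc
      exact h hc hx
    · intro hx
      obtain ⟨w, hw, hxw⟩ := hx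
      refine ⟨w, fun v hv => ?_, hxw⟩
      exact hv.1 w ⟨hw, hv.2⟩
  · rintro Y ⟨W, rfl⟩
    ext x
    simp only [Psi', Psi, leftQuot, rightQuot, mem_iUnion, mem_setOf_eq, not_exists,
      exists_prop, mem_iUnion₂]
    constructor
    · rintro ⟨v, hv, hx⟩
      have h := hv x
      push_neg at h
      by_contra hc
      push_neg at hc
      exact h hc hx
    · intro hx
      obtain ⟨w, hw, hxw⟩ := hx
      refine ⟨w, fun u hu => ?_, hxw⟩
      exact hu.1 w ⟨hw, hu.2⟩
end

section
/- Let Σ be a finite alphabet, let L ⊆ Σ* be a nonempty regular language, and let U₁ and U₂ be unions of left quotients of L. Then U₁ ⊆ U₂ if and only if Ψ(U₂) ⊆ Ψ(U₁). -/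
open Set

/-- Ψ reverses inclusions. -/
theorem psi_subset_iff {α : Type*} [Fintype α] (L : Set (List α))
    (hne : L.Nonempty) (hL : Language.IsRegular L) (U₁ U₂ : Set (List α))
    (hU₁ : IsUnionLeftQuot L U₁) (hU₂ : IsUnionLeftQuot L U₂) :
    U₁ ⊆ U₂ ↔ Psi L U₂ ⊆ Psi L U₁ := by
  constructor
  · intro h t ht
    simp only [Psi, mem_iUnion, mem_setOf_eq, exists_prop] at ht ⊢
    obtain ⟨v, hv, htv⟩ := ht
    exact ⟨v, fun hv1 => hv (h hv1), htv⟩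
  · intro h v hv
    by_contra hv2
    obtain ⟨W₁, rfl⟩ := hU₁
    simp only [mem_iUnion, exists_prop] at hv
    obtain ⟨w, hwW, hwv⟩ := hv
    have hw2 : w ∈ Psi L U₂ := by
      simp only [Psi, mem_iUnion, mem_setOf_eq, exists_prop]
      exact ⟨v, hv2, hwv⟩
    have hw1 := h hw2
    simp only [Psi, mem_iUnion, mem_setOf_eq, exists_prop] at hw1
    obtain ⟨u, hu, hwu⟩ := hw1
    exact hu ⟨w, hwW, hwu⟩
end

section
/- Let Σ be a finite alphabet, let L ⊆ Σ* be a nonempty regular language, and let U₁ and U₂ be unions of left quotients of L. Then Ψ(U₁ ∪ U₂) is the largest union of right quotients of L contained in Ψ(U₁) ∩ Ψ(U₂): Ψ(U₁ ∪ U₂) ⊆ Ψ(U₁) ∩ Ψ(U₂), and every union of right quotients V with V ⊆ Ψ(U₁) ∩ Ψ(U₂) satisfies V ⊆ Ψ(U₁ ∪ U₂). -/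
open Set

lemma rightQuot_subset_psi_notmem {α : Type*} {L U : Set (List α)}
    (hU : IsUnionLeftQuot L U) {v : List α}
    (h : rightQuot L v ⊆ Psi L U) : v ∉ U := by
  intro hv
  obtain ⟨W, rfl⟩ := hU
  rw [Set.mem_iUnion₂] at hv
  obtain ⟨w, hwW, hwv⟩ := hv
  have hw : w ∈ Psi L (⋃ w ∈ W, leftQuot L w) := h hwv
  rw [Psi, Set.mem_iUnion₂] at hw
  obtain ⟨v₁, hv₁, hwv₁⟩ := hw
  exact hv₁ (Set.mem_iUnion₂.2 ⟨w, hwW, hwv₁⟩)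

/-- Ψ(U₁ ∪ U₂) is the largest union of right quotients
contained in Ψ(U₁) ∩ Ψ(U₂). -/
theorem psi_union {α : Type*} [Fintype α] (L : Set (List α))
    (hne : L.Nonempty) (hL : Language.IsRegular L) (U₁ U₂ : Set (List α))
    (hU₁ : IsUnionLeftQuot L U₁) (hU₂ : IsUnionLeftQuot L U₂) :
    Psi L (U₁ ∪ U₂) ⊆ Psi L U₁ ∩ Psi L U₂ ∧
    ∀ V : Set (List α), IsUnionRightQuot L V → V ⊆ Psi L U₁ ∩ Psi L U₂ →
      V ⊆ Psi L (U₁ ∪ U₂) := by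
  constructor
  · intro u hu
    rw [Psi, Set.mem_iUnion₂] at hu
    obtain ⟨v, hv, huv⟩ := hu
    have hv' : v ∉ U₁ ∪ U₂ := hv
    constructor
    · exact Set.mem_iUnion₂.2 ⟨v, fun h => hv' (Or.inl h), huv⟩
    · exact Set.mem_iUnion₂.2 ⟨v, fun h => hv' (Or.inr h), huv⟩
  · rintro V ⟨W, rfl⟩ hV u hu
    rw [Set.mem_iUnion₂] at hu
    obtain ⟨v, hvW, huv⟩ := hu
    have hsub : rightQuot L v ⊆ Psi L U₁ ∩ Psi L U₂ := by
      refine Set.Subset.trans ?_ hV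
      exact Set.subset_iUnion₂ (s := fun v _ => rightQuot L v) v hvW
    have h1 : v ∉ U₁ := rightQuot_subset_psi_notmem hU₁ (hsub.trans Set.inter_subset_left)
    have h2 : v ∉ U₂ := rightQuot_subset_psi_notmem hU₂ (hsub.trans Set.inter_subset_right)
    rw [Psi, Set.mem_iUnion₂]
    exact ⟨v, fun h => h.elim h1 h2, huv⟩
end

section
/- Let Σ be a finite alphabet, let L ⊆ Σ* be a nonempty regular language, let U₁ and U₂ be unions of left quotients of L, and let V = ⋃ {w⁻¹L : w ∈ Σ*, w⁻¹L ⊆ U₁ ∩ U₂} be the largest union of left quotients contained in U₁ ∩ U₂. Then Ψ(V) = Ψ(U₁) ∪ Ψ(U₂). -/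
open Set

/-- Ψ of the largest union of left quotients contained in
`U₁ ∩ U₂` is `Ψ(U₁) ∪ Ψ(U₂)`. -/
theorem psi_meet {α : Type*} [Fintype α] (L : Set (List α))
    (hne : L.Nonempty) (hL : Language.IsRegular L) (U₁ U₂ V : Set (List α))
    (hU₁ : IsUnionLeftQuot L U₁) (hU₂ : IsUnionLeftQuot L U₂)
    (hV : V = ⋃ w ∈ {w : List α | leftQuot L w ⊆ U₁ ∩ U₂}, leftQuot L w) :
    Psi L V = Psi L U₁ ∪ Psi L U₂ := by
  have key : ∀ X : Set (List α), Psi L X = {u | ¬ leftQuot L u ⊆ X} := by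
    intro X
    ext u
    simp only [Psi, rightQuot, leftQuot, Set.mem_iUnion, Set.mem_setOf_eq,
      Set.subset_def, not_forall]
    tauto
  have hVsub : V ⊆ U₁ ∩ U₂ := by
    rw [hV]; exact Set.iUnion₂_subset fun w hw => hw
  ext u
  simp only [key, Set.mem_setOf_eq, Set.mem_union]
  constructor
  · intro h
    by_contra hc
    push_neg at hc
    exact h (fun x hx => by
      have : leftQuot L u ⊆ U₁ ∩ U₂ := Set.subset_inter (hc.1) (hc.2)
      rw [hV]
      exact Set.mem_biUnion this hx)
  · rintro (h | h) hsub
    · exact h (hsub.trans (hVsub.trans inter_subset_left))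
    · exact h (hsub.trans (hVsub.trans inter_subset_right))
end

section
/- Let Σ be a finite alphabet and let L ⊆ Σ* be a nonempty regular language. Then Φ and Φ' are mutually inverse bijections between the set of intersections of left quotients of L and the set of intersections of right quotients of L: for every intersection of left quotients X, Φ'(Φ(X)) = X, and for every intersection of right quotients Y, Φ(Φ'(Y)) = Y. -/
open Set

/-- Φ and Φ' are mutually inverse bijections. -/
theorem phi_phi'_inverse {α : Type*} [Fintype α] (L : Set (List α))
    (hne : L.Nonempty) (hL : Language.IsRegular L) :
    (∀ X : Set (List α), IsInterLeftQuot L X → Phi' L (Phi L X) = X) ∧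
    (∀ Y : Set (List α), IsInterRightQuot L Y → Phi L (Phi' L Y) = Y) := by
  constructor
  · rintro X ⟨W, rfl⟩
    ext x
    simp only [Phi, Phi', leftQuot, rightQuot, mem_iInter, mem_setOf_eq]
    constructor
    · intro h w hw
      exact h w (fun v hv => hv w hw)
    · intro hx u hu
      exact hu x hx
  · rintro Y ⟨W, rfl⟩
    ext x
    simp only [Phi, Phi', leftQuot, rightQuot, mem_iInter, mem_setOf_eq]
    constructor
    · intro h w hw
      exact h w (fun v hv => hv w hw)
    · intro hx u hu
      exact hu x hx
end

section
/- Let Σ be a finite alphabet, let L ⊆ Σ* be a nonempty regular language, and let U₁ and U₂ be intersections of left quotients of L. Then U₁ ⊆ U₂ if and only if Φ(U₂) ⊆ Φ(U₁). -/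
open Set

/-- Φ reverses inclusions. -/
theorem phi_subset_iff {α : Type*} [Fintype α] (L : Set (List α))
    (hne : L.Nonempty) (hL : Language.IsRegular L) (U₁ U₂ : Set (List α))
    (hU₁ : IsInterLeftQuot L U₁) (hU₂ : IsInterLeftQuot L U₂) :
    U₁ ⊆ U₂ ↔ Phi L U₂ ⊆ Phi L U₁ := by
  have phi_anti : ∀ X Y : Set (List α), X ⊆ Y → Phi L Y ⊆ Phi L X := by
    intro X Y h u hu
    simp only [Phi, mem_iInter, rightQuot, mem_setOf_eq] at hu ⊢
    exact fun v hv => hu v (h hv)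
  have phi'_anti : ∀ X Y : Set (List α), X ⊆ Y → Phi' L Y ⊆ Phi' L X := by
    intro X Y h u hu
    simp only [Phi', mem_iInter, leftQuot, mem_setOf_eq] at hu ⊢
    exact fun v hv => hu v (h hv)
  have sub1 : ∀ X : Set (List α), X ⊆ Phi' L (Phi L X) := by
    intro X x hx
    simp only [Phi', Phi, mem_iInter, leftQuot, rightQuot, mem_setOf_eq]
    intro u hu
    exact hu x hx
  have sub2 : ∀ W : Set (List α), W ⊆ Phi L (Phi' L W) := by
    intro W w hw
    simp only [Phi', Phi, mem_iInter, leftQuot, rightQuot, mem_setOf_eq]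
    intro u hu
    exact hu w hw
  have closed : ∀ U : Set (List α), IsInterLeftQuot L U → Phi' L (Phi L U) = U := by
    rintro U ⟨W, rfl⟩
    have hU : (⋂ w ∈ W, leftQuot L w) = Phi' L W := rfl
    rw [hU]
    exact Subset.antisymm (phi'_anti _ _ (sub2 W)) (sub1 _)
  constructor
  · exact fun h => phi_anti _ _ h
  · intro h
    rw [← closed U₁ hU₁, ← closed U₂ hU₂]
    exact phi'_anti _ _ h
end

section
/- Let Σ be a finite alphabet, let L ⊆ Σ* be a nonempty regular language, and let U₁ and U₂ be intersections of left quotients of L. Then Φ(U₁ ∩ U₂) is the smallest intersection of right quotients of L containing Φ(U₁) ∪ Φ(U₂): Φ(U₁) ∪ Φ(U₂) ⊆ Φ(U₁ ∩ U₂), and every intersection of right quotients V with Φ(U₁) ∪ Φ(U₂) ⊆ V satisfies Φ(U₁ ∩ U₂) ⊆ V. -/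
open Set

/-- Φ(U₁ ∩ U₂) is the smallest intersection of right quotients
containing Φ(U₁) ∪ Φ(U₂). -/
theorem phi_inter {α : Type*} [Fintype α] (L : Set (List α))
    (hne : L.Nonempty) (hL : Language.IsRegular L) (U₁ U₂ : Set (List α))
    (hU₁ : IsInterLeftQuot L U₁) (hU₂ : IsInterLeftQuot L U₂) :
    Phi L U₁ ∪ Phi L U₂ ⊆ Phi L (U₁ ∩ U₂) ∧
    ∀ V : Set (List α), IsInterRightQuot L V → Phi L U₁ ∪ Phi L U₂ ⊆ V →
      Phi L (U₁ ∩ U₂) ⊆ V := by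
  have mono : ∀ A B : Set (List α), A ⊆ B → Phi L B ⊆ Phi L A := by
    intro A B hAB x hx
    simp only [Phi, mem_iInter] at hx ⊢
    exact fun v hv => hx v (hAB hv)
  have key : ∀ U : Set (List α), IsInterLeftQuot L U →
      ∀ v : List α, Phi L U ⊆ rightQuot L v → v ∈ U := by
    rintro U ⟨W, rfl⟩ v h
    simp only [mem_iInter]
    intro w hw
    have hwPhi : w ∈ Phi L (⋂ w ∈ W, leftQuot L w) := by
      simp only [Phi, mem_iInter]
      intro x hx
      exact hx w hw
    exact h hwPhi
  constructor
  · exact union_subset (mono _ _ inter_subset_left) (mono _ _ inter_subset_right)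
  · rintro V ⟨W, rfl⟩ hsub x hx
    simp only [mem_iInter]
    intro v hv
    have hVsub : (⋂ v ∈ W, rightQuot L v) ⊆ rightQuot L v := by
      intro y hy; simp only [mem_iInter] at hy; exact hy v hv
    have hv₁ := key U₁ hU₁ v (fun y hy => hVsub (hsub (Or.inl hy)))
    have hv₂ := key U₂ hU₂ v (fun y hy => hVsub (hsub (Or.inr hy)))
    simp only [Phi, mem_iInter] at hx
    exact hx v ⟨hv₁, hv₂⟩
end

section
/- Let Σ be a finite alphabet, let L ⊆ Σ* be a nonempty regular language, let U₁ and U₂ be intersections of left quotients of L, and let V = ⋂ {w⁻¹L : w ∈ Σ*, U₁ ∪ U₂ ⊆ w⁻¹L} be the smallest intersection of left quotients containing U₁ ∪ U₂ (with the empty intersection equal to Σ*). Then Φ(V) = Φ(U₁) ∩ Φ(U₂). -/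
open Set

/-- Φ of the smallest intersection of left quotients containing
`U₁ ∪ U₂` is `Φ(U₁) ∩ Φ(U₂)`. -/
theorem phi_join {α : Type*} [Fintype α] (L : Set (List α))
    (hne : L.Nonempty) (hL : Language.IsRegular L) (U₁ U₂ V : Set (List α))
    (hU₁ : IsInterLeftQuot L U₁) (hU₂ : IsInterLeftQuot L U₂)
    (hV : V = ⋂ w ∈ {w : List α | U₁ ∪ U₂ ⊆ leftQuot L w}, leftQuot L w) :
    Phi L V = Phi L U₁ ∩ Phi L U₂ := by
  ext u
  simp only [Phi, rightQuot, mem_iInter, mem_inter_iff, mem_setOf_eq]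
  constructor
  · intro h
    have hsub : ∀ U : Set (List α), U ⊆ U₁ ∪ U₂ → ∀ v ∈ U, u ++ v ∈ L := by
      intro U hU v hv
      apply h
      rw [hV]
      simp only [mem_iInter, mem_setOf_eq]
      intro w hw
      exact hw (hU hv)
    exact ⟨fun v hv => hsub U₁ subset_union_left v hv,
           fun v hv => hsub U₂ subset_union_right v hv⟩
  · rintro ⟨h₁, h₂⟩ v hv
    rw [hV] at hv
    simp only [mem_iInter, mem_setOf_eq] at hv
    have : U₁ ∪ U₂ ⊆ leftQuot L u := by
      rintro x (hx | hx)
      · exact h₁ x hx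
      · exact h₂ x hx
    exact hv u this
end

section
/- Let Σ be a finite alphabet, let L ⊆ Σ* be a nonempty regular language, and let n be the (finite) number of distinct left quotients of L, i.e., n = |{w⁻¹L : w ∈ Σ*}|. Then the number of distinct unions of left quotients of L equals 2^n if and only if for every w ∈ Σ* the set w⁻¹L \ ⋃ {u⁻¹L : u ∈ Σ*, u⁻¹L ≠ w⁻¹L} is nonempty (i.e., every left atomic intersection with one uncomplemented and n−1 complemented left quotients is nonempty). -/
open Set

/-!
Unions of left quotients are the unions `⋃₀ S` of subfamilies `S` of the finite family `Q` of
quotients, so there are `2 ^ |Q|` of them exactly when `S ↦ ⋃₀ S` is injective on `𝒫 Q`. That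
happens iff no quotient is covered by the others: a covered `q` gives `⋃₀ (Q \ {q}) = ⋃₀ Q`, and
conversely a word lying in `q` and in no other quotient detects whether `q ∈ S` from `⋃₀ S`.
-/

section SUnionPowerset

variable {β : Type*}

theorem injOn_sUnion_powerset_iff (Q : Set (Set β)) :
    InjOn sUnion (𝒫 Q) ↔ ∀ q ∈ Q, (q \ ⋃₀ (Q \ {q})).Nonempty := by
  constructor
  · intro hinj q hq
    by_contra hcovered
    rw [not_nonempty_iff_eq_empty, sdiff_eq_empty] at hcovered
    have hunion : ⋃₀ Q = ⋃₀ (Q \ {q}) := by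
      conv_lhs => rw [← insert_sdiff_self_of_mem hq]
      rw [sUnion_insert, union_eq_right.mpr hcovered]
    have hdiff : Q \ {q} = Q := hinj sdiff_subset (subset_refl Q) hunion.symm
    exact (hdiff.symm ▸ hq : q ∈ Q \ {q}).2 rfl
  · intro hprivate
    have hsubset : ∀ S T, S ⊆ Q → T ⊆ Q → ⋃₀ S ⊆ ⋃₀ T → S ⊆ T := by
      intro S T hS hT hST q hqS
      obtain ⟨x, hxq, hxrest⟩ := hprivate q (hS hqS)
      obtain ⟨q', hq'T, hxq'⟩ := hST ⟨q, hqS, hxq⟩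
      by_contra hqT
      have hne : q' ≠ q := fun h => hqT (h ▸ hq'T)
      exact hxrest ⟨q', ⟨hT hq'T, hne⟩, hxq'⟩
    intro S hS T hT hST
    exact (hsubset S T hS hT hST.le).antisymm (hsubset T S hT hS hST.ge)

theorem ncard_image_sUnion_powerset_eq_iff {Q : Set (Set β)} (hQ : Q.Finite) :
    (sUnion '' 𝒫 Q).ncard = 2 ^ Q.ncard ↔ ∀ q ∈ Q, (q \ ⋃₀ (Q \ {q})).Nonempty := by
  rw [← ncard_powerset Q hQ, ncard_image_iff hQ.powerset, injOn_sUnion_powerset_iff]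

variable {ι : Type*}

theorem setOf_eq_biUnion_eq_image_sUnion (f : ι → Set β) :
    {X | ∃ W : Set ι, X = ⋃ w ∈ W, f w} = sUnion '' 𝒫 (range f) := by
  ext X
  constructor
  · rintro ⟨W, rfl⟩
    exact ⟨f '' W, image_subset_range f W, sUnion_image f W⟩
  · rintro ⟨S, hS, rfl⟩
    exact ⟨f ⁻¹' S, by rw [← sUnion_image, image_preimage_eq_of_subset hS]⟩

theorem biUnion_ne_eq_sUnion_range_diff (f : ι → Set β) (w : ι) :
    ⋃ u ∈ {u | f u ≠ f w}, f u = ⋃₀ (range f \ {f w}) := by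
  ext x
  simp

end SUnionPowerset

theorem union_complexity_general {α : Type*} (L : Set (List α))
    (hL : Language.IsRegular L) (n : ℕ)
    (hn : n = {X : Set (List α) | ∃ w : List α, X = leftQuot L w}.ncard) :
    {X : Set (List α) | IsUnionLeftQuot L X}.ncard = 2 ^ n ↔
      ∀ w : List α,
        (leftQuot L w \
          ⋃ u ∈ {u : List α | leftQuot L u ≠ leftQuot L w}, leftQuot L u).Nonempty := by
  have hquots : {X : Set (List α) | ∃ w : List α, X = leftQuot L w} = range (leftQuot L) := by
    ext X
    simp [eq_comm]
  have hunions : {X | IsUnionLeftQuot L X} = sUnion '' 𝒫 range (leftQuot L) :=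
    setOf_eq_biUnion_eq_image_sUnion (leftQuot L)
  have hfin : (range (leftQuot L)).Finite := hL.finite_range_leftQuotient
  rw [hn, hquots, hunions, ncard_image_sUnion_powerset_eq_iff hfin, forall_mem_range]
  simp_rw [biUnion_ne_eq_sUnion_range_diff]

/-- the union lattice has maximal complexity `2^n` iff all atomic
intersections with one uncomplemented quotient are nonempty. -/
theorem union_complexity {α : Type*} [Fintype α] (L : Set (List α))
    (hne : L.Nonempty) (hL : Language.IsRegular L) (n : ℕ)
    (hn : n = {X : Set (List α) | ∃ w : List α, X = leftQuot L w}.ncard) :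
    {X : Set (List α) | IsUnionLeftQuot L X}.ncard = 2 ^ n ↔
      ∀ w : List α,
        (leftQuot L w \
          ⋃ u ∈ {u : List α | leftQuot L u ≠ leftQuot L w}, leftQuot L u).Nonempty :=
  union_complexity_general L hL n hn
end

section
/- Let Σ be a finite alphabet, let L ⊆ Σ* be a nonempty regular language, and let n be the (finite) number of distinct left quotients of L, i.e., n = |{w⁻¹L : w ∈ Σ*}|. Then the number of distinct intersections of left quotients of L equals 2^n if and only if for every w ∈ Σ* the set (⋂ {u⁻¹L : u ∈ Σ*, u⁻¹L ≠ w⁻¹L}) \ w⁻¹L is nonempty, where an intersection over an empty index family is Σ* (i.e., every left atomic intersection with n−1 uncomplemented and one complemented left quotients is nonempty). -/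
open Set

lemma ncard_setOf_subset {β : Type*} {s : Set β} (hs : s.Finite) :
    {t : Set β | t ⊆ s}.ncard = 2 ^ s.ncard := by
  classical
  have h1 : {t : Set β | t ⊆ s} =
      (fun f : Finset β => (f : Set β)) '' ↑hs.toFinset.powerset := by
    ext t
    simp only [mem_setOf_eq, Set.mem_image, Finset.mem_coe, Finset.mem_powerset]
    constructor
    · intro ht
      refine ⟨(hs.subset ht).toFinset, ?_, by simp⟩
      intro x hx
      simp only [Set.Finite.mem_toFinset] at hx ⊢
      exact ht hx
    · rintro ⟨f, hf, rfl⟩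
      intro x hx
      have := hf hx
      simpa using this
  rw [h1, Set.ncard_image_of_injective _ Finset.coe_injective, Set.ncard_coe_finset,
    Finset.card_powerset, Set.ncard_eq_toFinset_card s hs]

/-- the intersection lattice has maximal complexity `2^n` iff all
atomic intersections with one complemented quotient are nonempty. -/
theorem inter_complexity {α : Type*} [Fintype α] (L : Set (List α))
    (hne : L.Nonempty) (hL : Language.IsRegular L) (n : ℕ)
    (hn : n = {X : Set (List α) | ∃ w : List α, X = leftQuot L w}.ncard) :
    {X : Set (List α) | IsInterLeftQuot L X}.ncard = 2 ^ n ↔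
      ∀ w : List α,
        ((⋂ u ∈ {u : List α | leftQuot L u ≠ leftQuot L w}, leftQuot L u) \
          leftQuot L w).Nonempty := by
  classical
  set Q : Set (Set (List α)) := {X | ∃ w : List α, X = leftQuot L w} with hQ
  -- Q is finite
  obtain ⟨σ, hσ, M, hM⟩ := hL
  have hQfin : Q.Finite := by
    have hsub : Q ⊆ Set.range (fun s : σ => {x | M.evalFrom s x ∈ M.accept}) := by
      rintro X ⟨w, rfl⟩
      refine ⟨M.eval w, ?_⟩
      ext x
      rw [mem_setOf_eq]
      have h2 : (x ∈ leftQuot L w) = (w ++ x ∈ M.accepts) := by rw [hM]; rfl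
      rw [h2, DFA.mem_accepts, DFA.eval, DFA.evalFrom_of_append]
    exact (Set.finite_range _).subset hsub
  -- The set of intersections is the image of the powerset of Q under sInter
  have hIm : {X : Set (List α) | IsInterLeftQuot L X} = sInter '' {S | S ⊆ Q} := by
    ext X
    constructor
    · rintro ⟨W, rfl⟩
      refine ⟨leftQuot L '' W, ?_, ?_⟩
      · rintro Y ⟨w, _, rfl⟩; exact ⟨w, rfl⟩
      · rw [Set.sInter_image]
    · rintro ⟨S, hS, rfl⟩
      refine ⟨{w | leftQuot L w ∈ S}, ?_⟩
      apply subset_antisymm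
      · intro x hx
        simp only [Set.mem_iInter]
        intro w hw
        exact hx _ hw
      · intro x hx Y hY
        obtain ⟨w, rfl⟩ := hS hY
        simp only [Set.mem_iInter] at hx
        exact hx w hY
  -- each atomic intersection rewrites as sInter over Q minus the quotient
  have hAtom : ∀ w : List α,
      (⋂ u ∈ {u : List α | leftQuot L u ≠ leftQuot L w}, leftQuot L u) =
        ⋂₀ (Q \ {leftQuot L w}) := by
    intro w
    apply subset_antisymm
    · intro x hx Y hY
      obtain ⟨⟨u, rfl⟩, hne'⟩ := hY
      simp only [Set.mem_iInter] at hx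
      exact hx u hne'
    · intro x hx
      simp only [Set.mem_iInter]
      intro u hu
      exact hx _ ⟨⟨u, rfl⟩, hu⟩
  rw [hIm, hn, ← ncard_setOf_subset hQfin, Set.ncard_image_iff hQfin.finite_subsets]
  constructor
  · -- InjOn implies atomic nonempty
    intro hinj w
    rw [hAtom w]
    by_contra hempty
    rw [Set.not_nonempty_iff_eq_empty, Set.diff_eq_empty] at hempty
    have hq : leftQuot L w ∈ Q := ⟨w, rfl⟩
    have heq : ⋂₀ (Q \ {leftQuot L w}) = ⋂₀ Q := by
      apply subset_antisymm
      · intro x hx Y hY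
        by_cases h : Y = leftQuot L w
        · exact h ▸ hempty hx
        · exact hx Y ⟨hY, h⟩
      · exact Set.sInter_subset_sInter Set.diff_subset
    have hQQ := hinj (Set.diff_subset : Q \ {leftQuot L w} ⊆ Q) (le_refl Q) heq
    rw [← hQQ] at hq
    exact hq.2 rfl
  · -- atomic nonempty implies InjOn
    intro hatom S hS T hT hST
    have key : ∀ (S T : Set (Set (List α))), S ⊆ Q → T ⊆ Q → ⋂₀ S = ⋂₀ T → S ⊆ T := by
      intro S T hS hT hST Y hYS
      by_contra hYT
      obtain ⟨w, rfl⟩ := hS hYS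
      obtain ⟨x, hx1, hx2⟩ := hatom w
      rw [hAtom w] at hx1
      have hxT : x ∈ ⋂₀ T := by
        intro Z hZ
        obtain ⟨u, rfl⟩ := hT hZ
        refine hx1 _ ⟨⟨u, rfl⟩, ?_⟩
        intro h
        exact hYT (h ▸ hZ)
      rw [← hST] at hxT
      exact hx2 (hxT _ hYS)
    exact subset_antisymm (key S T hS hT hST) (key T S hT hS hST.symm)
end

section
/- Let Σ be a finite alphabet and let L ⊆ Σ* be a nonempty regular language. (1) For every union of left quotients X of L, Ψ(X) = ⋃ {B(w) : w ∈ Σ*, ∃ u ∈ B(w), ∃ x ∉ X, ux ∈ L} (i.e., Ψ(X) is the union of those right atoms B with ⟨B, complement of X⟩_L = 1). (2) For every intersection of left quotients Z of L, Φ(Z) = ⋃ {B(w) : w ∈ Σ*, Z ∩ B(w)^⊥ = ∅}, where B(w)^⊥ = {x ∈ Σ* : ∀ u ∈ B(w), ux ∉ L} is the orthogonal complement of B(w) with respect to the Im–Khovanov pairing. -/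
open Set

/-- description of Ψ and Φ via the Im–Khovanov pairing. -/
theorem psi_phi_pairing {α : Type*} [Fintype α] (L : Set (List α))
    (hne : L.Nonempty) (hL : Language.IsRegular L) :
    (∀ X : Set (List α), IsUnionLeftQuot L X →
      Psi L X = ⋃ w ∈ {w : List α | ∃ u ∈ rightAtom L w, ∃ x ∉ X, u ++ x ∈ L},
        rightAtom L w) ∧
    (∀ Z : Set (List α), IsInterLeftQuot L Z →
      Phi L Z = ⋃ w ∈ {w : List α |
          Z ∩ {x : List α | ∀ u ∈ rightAtom L w, u ++ x ∉ L} = ∅},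
        rightAtom L w) := by
  constructor
  · intro X _
    ext u
    simp only [Psi, mem_iUnion, mem_setOf_eq, rightQuot, exists_prop]
    constructor
    · rintro ⟨v, hv, huv⟩
      exact ⟨u, ⟨u, fun x => Iff.rfl, v, hv, huv⟩, fun x => Iff.rfl⟩
    · rintro ⟨w, ⟨u', hu', x, hx, hux⟩, hu⟩
      exact ⟨x, hx, (hu x).mpr ((hu' x).mp hux)⟩
  · intro Z _
    ext u
    simp only [Phi, mem_iInter, mem_iUnion, mem_setOf_eq, rightQuot, exists_prop]
    constructor
    · intro h
      refine ⟨u, ?_, fun x => Iff.rfl⟩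
      ext v
      simp only [mem_inter_iff, mem_setOf_eq, mem_empty_iff_false, iff_false, not_and]
      intro hv habs
      exact habs u (fun x => Iff.rfl) (h v hv)
    · rintro ⟨w, hw, hu⟩ v hv
      have : v ∉ Z ∩ {x : List α | ∀ u ∈ rightAtom L w, u ++ x ∉ L} := by
        rw [hw]; exact notMem_empty v
      rw [mem_inter_iff] at this
      push_neg at this
      have h2 : ¬ ∀ u ∈ rightAtom L w, u ++ v ∉ L := this hv
      push_neg at h2
      obtain ⟨u', hu', huv⟩ := h2
      exact (hu v).mpr ((hu' v).mp huv)
end
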